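/- (Converse for resolvability) Let f: (0,∞) → ℝ be convex, nonincreasing with f(1) = 0, f(0) > 0, and lim_{u→∞} f(u)/u = 0. Let P be a probability distribution on a finite set 𝒳ⁿ, let D ∈ [0, f(0)), and let φ: {1,...,M} → 𝒳ⁿ be a map with D_f(P || P_{φ(U_M)}) ≤ D. Then log M ≥ H_0(1 - f^{-1}(D) | P), where H_0(δ|P) := min{ log|A| : A ⊆ 𝒳ⁿ, P(A) ≥ 1 - δ } is the smooth max entropy and f^{-1}(a) := inf{t : f(t) = a}. -/
import Mathlib


open Filter Topology

/-- A convex function on `(0,∞)` whose right limit at `0` is `f 0` satisfies the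
convexity inequality with one endpoint equal to `0`. -/
lemma convex_zero_ext (f : ℝ → ℝ) (hconv : ConvexOn ℝ (Set.Ioi 0) f)
    (hf0 : Tendsto f (nhdsWithin 0 (Set.Ioi 0)) (𝓝 (f 0)))
    (s b : ℝ) (hs : 0 < s) (hs1 : s < 1) (hb : 0 < b) :
    f (s * b) ≤ s * f b + (1 - s) * f 0 := by
  have hcont : ContinuousOn f (Set.Ioi 0) := hconv.continuousOn isOpen_Ioi
  have key : ∀ ε : ℝ, 0 < ε → f (s * b + (1 - s) * ε) ≤ s * f b + (1 - s) * f ε := by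
    intro ε hε
    have := hconv.2 (Set.mem_Ioi.2 hb) (Set.mem_Ioi.2 hε) hs.le
      (show (0:ℝ) ≤ 1 - s by linarith) (show s + (1 - s) = 1 by ring)
    simpa [smul_eq_mul] using this
  have hsb : 0 < s * b := mul_pos hs hb
  have hlin : Tendsto (fun ε : ℝ => s * b + (1 - s) * ε) (𝓝[>] (0:ℝ)) (𝓝 (s * b)) := by
    have hco : Continuous (fun ε : ℝ => s * b + (1 - s) * ε) := by continuity
    have := (hco.tendsto 0).mono_left (nhdsWithin_le_nhds (s := Set.Ioi (0:ℝ)))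
    simpa using this
  have hc : ContinuousAt f (s * b) := hcont.continuousAt (Ioi_mem_nhds hsb)
  have h1 : Tendsto (fun ε => f (s * b + (1 - s) * ε)) (𝓝[>] (0:ℝ)) (𝓝 (f (s * b))) :=
    hc.tendsto.comp hlin
  have h2 : Tendsto (fun ε => s * f b + (1 - s) * f ε) (𝓝[>] (0:ℝ))
      (𝓝 (s * f b + (1 - s) * f 0)) :=
    tendsto_const_nhds.add (hf0.const_mul _)
  exact le_of_tendsto_of_tendsto h1 h2 (eventually_nhdsWithin_of_forall fun ε hε => key ε hε)

/-- Converse for resolvability: if `D_f(P ‖ φ(U_M)) ≤ D`, then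
`log M ≥ H₀(1 - f⁻¹(D) | P)`, where `H₀(δ|P)` is the smooth max entropy
`min { log |A| : P(A) ≥ 1 - δ }` and `f⁻¹(a) = inf { t : f t = a }`. -/
theorem resolvability_converse {X : Type*} [Fintype X] [Nonempty X] [DecidableEq X]
    (f : ℝ → ℝ) (hconv : ConvexOn ℝ (Set.Ioi 0) f)
    (hanti : AntitoneOn f (Set.Ioi 0)) (hf1 : f 1 = 0)
    (hf0 : Tendsto f (nhdsWithin 0 (Set.Ioi 0)) (𝓝 (f 0))) (hf0pos : 0 < f 0)
    (hcf : Tendsto (fun u => f u / u) atTop (𝓝 0))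
    (P : X → ℝ) (hP : ∀ x, 0 ≤ P x) (hP1 : ∑ x, P x = 1)
    (D : ℝ) (hD0 : 0 ≤ D) (hD : D < f 0)
    (M : ℕ) (hM : 1 ≤ M) (φ : Fin M → X)
    (hDf : ∑ x, (((Finset.univ.filter (fun i : Fin M => φ i = x)).card : ℝ) / M) *
        f (P x / (((Finset.univ.filter (fun i : Fin M => φ i = x)).card : ℝ) / M))
        ≤ D) :
    sInf {r : ℝ | ∃ A : Finset X,
        sInf {t : ℝ | f t = D} ≤ ∑ x ∈ A, P x ∧ r = Real.log A.card}
      ≤ Real.log M := by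
  have hMpos : (0:ℝ) < M := by exact_mod_cast hM
  set Q : X → ℝ := fun x => ((Finset.univ.filter (fun i : Fin M => φ i = x)).card : ℝ) / M
    with hQdef
  have hQnonneg : ∀ x, 0 ≤ Q x := fun x => by positivity
  have hcardsum : ∑ x : X, ((Finset.univ.filter (fun i : Fin M => φ i = x)).card) = M := by
    rw [← Finset.card_eq_sum_card_fiberwise (fun i _ => Finset.mem_univ (φ i))]
    simp
  have hQsum : ∑ x, Q x = 1 := by
    simp only [hQdef, ← Finset.sum_div]
    rw [← Nat.cast_sum, hcardsum]
    field_simp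
  set A : Finset X := Finset.univ.image φ with hAdef
  have hQzero : ∀ x ∉ A, Q x = 0 := by
    intro x hx
    have : (Finset.univ.filter (fun i : Fin M => φ i = x)) = ∅ := by
      ext i
      simp only [Finset.mem_filter, Finset.mem_univ, true_and, Finset.notMem_empty,
        iff_false]
      intro h
      exact hx (by simp [hAdef, ← h])
    simp [hQdef, this]
  have hQpos : ∀ x ∈ A, 0 < Q x := by
    intro x hx
    simp only [hAdef, Finset.mem_image, Finset.mem_univ, true_and] at hx
    obtain ⟨i, hi⟩ := hx
    have : i ∈ Finset.univ.filter (fun i : Fin M => φ i = x) := by simp [hi]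
    have hcard : 0 < (Finset.univ.filter (fun i : Fin M => φ i = x)).card :=
      Finset.card_pos.2 ⟨i, this⟩
    have : (0:ℝ) < ((Finset.univ.filter (fun i : Fin M => φ i = x)).card : ℝ) := by
      exact_mod_cast hcard
    exact div_pos this hMpos
  have hQA : ∑ x ∈ A, Q x = 1 := by
    rw [← hQsum]
    exact Finset.sum_subset (Finset.subset_univ A) (fun x _ hx => hQzero x hx)
  -- restrict the divergence sum to A
  have hS : ∑ x ∈ A, Q x * f (P x / Q x) ≤ D := by
    refine le_trans (le_of_eq ?_) hDf
    refine Finset.sum_subset (Finset.subset_univ A) (fun x _ hx => ?_)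
    rw [hQzero x hx]; ring
  set A' : Finset X := A.filter (fun x => 0 < P x) with hA'def
  set pA : ℝ := ∑ x ∈ A, P x with hpAdef
  have hpA' : ∑ x ∈ A', P x = pA := by
    refine Finset.sum_filter_of_ne (fun x _ hx => ?_)
    exact lt_of_le_of_ne (hP x) (Ne.symm hx)
  have hsplit : ∑ x ∈ A, Q x * f (P x / Q x)
      = ∑ x ∈ A', Q x * f (P x / Q x) + ∑ x ∈ A.filter (fun x => ¬ 0 < P x), Q x * f 0 := by
    rw [← Finset.sum_filter_add_sum_filter_not A (fun x => 0 < P x)]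
    congr 1
    refine Finset.sum_congr rfl (fun x hx => ?_)
    have hx' := Finset.mem_filter.1 hx
    have hPx : P x = 0 := le_antisymm (not_lt.1 hx'.2) (hP x)
    rw [hPx, zero_div]
  set s₀ : ℝ := ∑ x ∈ A', Q x with hs₀def
  have hs₀comp : ∑ x ∈ A.filter (fun x => ¬ 0 < P x), Q x = 1 - s₀ := by
    have h := Finset.sum_filter_add_sum_filter_not A (fun x => 0 < P x) Q
    rw [hQA] at h
    rw [hs₀def, hA'def]
    linarith [h]
  -- A' is nonempty
  have hA'ne : A'.Nonempty := by
    by_contra hne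
    rw [Finset.not_nonempty_iff_eq_empty] at hne
    have hs₀0 : s₀ = 0 := by simp [hs₀def, hne]
    have hle := hS
    rw [hsplit, hne, Finset.sum_empty, zero_add, ← Finset.sum_mul, hs₀comp, hs₀0] at hle
    linarith
  have hs₀pos : 0 < s₀ := by
    obtain ⟨x, hx⟩ := hA'ne
    have hxA : x ∈ A := (Finset.mem_filter.1 hx).1
    exact Finset.sum_pos' (fun y hy => hQnonneg y) ⟨x, hx, hQpos x hxA⟩
  have hs₀le : s₀ ≤ 1 := by
    rw [← hQA]
    exact Finset.sum_le_sum_of_subset_of_nonneg (Finset.filter_subset _ _)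
      (fun y hy _ => hQnonneg y)
  have hpApos : 0 < pA := by
    rw [← hpA']
    obtain ⟨x, hx⟩ := hA'ne
    exact Finset.sum_pos' (fun y hy => hP y) ⟨x, hx, (Finset.mem_filter.1 hx).2⟩
  have hpAle : pA ≤ 1 := by
    rw [hpAdef, ← hP1]
    exact Finset.sum_le_sum_of_subset_of_nonneg (Finset.subset_univ A) (fun y _ _ => hP y)
  -- Jensen
  have hjensen : f (pA / s₀) ≤ ∑ x ∈ A', (Q x / s₀) * f (P x / Q x) := by
    have hw0 : ∀ x ∈ A', 0 ≤ Q x / s₀ := fun x hx => div_nonneg (hQnonneg x) hs₀pos.le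
    have hw1 : ∑ x ∈ A', Q x / s₀ = 1 := by
      rw [← Finset.sum_div, ← hs₀def, div_self hs₀pos.ne']
    have hmem : ∀ x ∈ A', P x / Q x ∈ Set.Ioi (0:ℝ) := by
      intro x hx
      have hx' := Finset.mem_filter.1 hx
      exact Set.mem_Ioi.2 (div_pos hx'.2 (hQpos x hx'.1))
    have := hconv.map_sum_le hw0 hw1 hmem
    have heq : ∑ x ∈ A', (Q x / s₀) • (P x / Q x) = pA / s₀ := by
      rw [← hpA', Finset.sum_div]
      refine Finset.sum_congr rfl (fun x hx => ?_)
      have hx' := Finset.mem_filter.1 hx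
      have hQx := (hQpos x hx'.1).ne'
      rw [smul_eq_mul, div_mul_div_comm, mul_comm s₀ (Q x), mul_div_mul_left _ _ hQx]
    rw [heq] at this
    simpa [smul_eq_mul] using this
  have hmain : s₀ * f (pA / s₀) + (1 - s₀) * f 0 ≤ D := by
    have h1 : s₀ * f (pA / s₀) ≤ ∑ x ∈ A', Q x * f (P x / Q x) := by
      calc s₀ * f (pA / s₀) ≤ s₀ * ∑ x ∈ A', (Q x / s₀) * f (P x / Q x) :=
            mul_le_mul_of_nonneg_left hjensen hs₀pos.le
        _ = ∑ x ∈ A', Q x * f (P x / Q x) := by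
            rw [Finset.mul_sum]
            refine Finset.sum_congr rfl (fun x hx => ?_)
            rw [← mul_assoc, mul_div_cancel₀ _ hs₀pos.ne']
    have h2 : ∑ x ∈ A.filter (fun x => ¬ 0 < P x), Q x * f 0 = (1 - s₀) * f 0 := by
      rw [← Finset.sum_mul, hs₀comp]
    calc s₀ * f (pA / s₀) + (1 - s₀) * f 0
        ≤ ∑ x ∈ A', Q x * f (P x / Q x) + ∑ x ∈ A.filter (fun x => ¬ 0 < P x), Q x * f 0 := by
          rw [h2]; linarith
      _ = ∑ x ∈ A, Q x * f (P x / Q x) := hsplit.symm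
      _ ≤ D := hS
  have hfpA : f pA ≤ D := by
    rcases eq_or_lt_of_le hs₀le with hs₀1 | hs₀1
    · rw [hs₀1] at hmain
      simpa using hmain
    · have hpAs : 0 < pA / s₀ := div_pos hpApos hs₀pos
      have := convex_zero_ext f hconv hf0 s₀ (pA / s₀) hs₀pos hs₀1 hpAs
      rw [mul_div_cancel₀ _ hs₀pos.ne'] at this
      linarith
  -- find t with f t = D and t ≤ pA, via IVT
  have hev1 : ∀ᶠ ε in 𝓝[>] (0:ℝ), D < f ε := hf0.eventually (eventually_gt_nhds hD)
  have hev2 : ∀ᶠ ε in 𝓝[>] (0:ℝ), ε < pA :=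
    eventually_nhdsWithin_of_eventually_nhds (eventually_lt_nhds hpApos)
  have hev3 : ∀ᶠ ε in 𝓝[>] (0:ℝ), 0 < ε := self_mem_nhdsWithin
  obtain ⟨ε, ⟨hεD, hεpA⟩, hεpos⟩ := ((hev1.and hev2).and hev3).exists
  have hIcc : Set.Icc ε pA ⊆ Set.Ioi 0 := fun y hy => lt_of_lt_of_le hεpos hy.1
  have hcontI : ContinuousOn f (Set.Icc ε pA) :=
    (hconv.continuousOn isOpen_Ioi).mono hIcc
  have hDmem : D ∈ Set.Icc (f pA) (f ε) := ⟨hfpA, hεD.le⟩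
  obtain ⟨t, htmem, htD⟩ := intermediate_value_Icc' hεpA.le hcontI hDmem
  have hinner : sInf {t : ℝ | f t = D} ≤ pA := by
    by_cases hbd : BddBelow {t : ℝ | f t = D}
    · exact le_trans (csInf_le hbd htD) htmem.2
    · rw [Real.sInf_of_not_bddBelow hbd]; exact hpApos.le
  -- conclude
  have hmemOuter : Real.log A.card ∈ {r : ℝ | ∃ B : Finset X,
      sInf {t : ℝ | f t = D} ≤ ∑ x ∈ B, P x ∧ r = Real.log B.card} := ⟨A, hinner, rfl⟩
  have hbddOuter : BddBelow {r : ℝ | ∃ B : Finset X,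
      sInf {t : ℝ | f t = D} ≤ ∑ x ∈ B, P x ∧ r = Real.log B.card} := by
    refine ⟨0, fun r hr => ?_⟩
    obtain ⟨B, _, hrB⟩ := hr
    rw [hrB]
    rcases Nat.eq_zero_or_pos B.card with h0 | h1
    · simp [h0]
    · exact Real.log_nonneg (by exact_mod_cast h1)
  have hcardA : 0 < A.card := Finset.card_pos.2 ⟨φ ⟨0, hM⟩, by simp [hAdef]⟩
  have hcardle : A.card ≤ M := le_trans Finset.card_image_le (by simp)
  calc sInf {r : ℝ | ∃ B : Finset X,
        sInf {t : ℝ | f t = D} ≤ ∑ x ∈ B, P x ∧ r = Real.log B.card}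
      ≤ Real.log A.card := csInf_le hbddOuter hmemOuter
    _ ≤ Real.log M := Real.log_le_log (by exact_mod_cast hcardA) (by exact_mod_cast hcardle)
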